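/- arXiv:1501.05160 — 2 statements merged into one kernel-verified Lean document; each statement's English description precedes it below -/
import Mathlib

section
/- Let C(α_0,...,α_n) be the unitary (n+1)×(n+1) CMV matrix with α_0,...,α_{n-1} ∈ 𝔻 and |α_n| = 1, with n odd. Then the n×n matrix obtained by deleting the first row and first column of C(α_0,...,α_n) is unitarily equivalent to the CMV matrix C(-conj(α_{n-1})α_n, -conj(α_{n-2})α_n, ..., -conj(α_0)α_n). -/
open Matrix

/-- `ρ_k = √(1 - |α_k|²)` as a complex number. -/
noncomputable def cmvRho (α : ℕ → ℂ) (k : ℕ) : ℂ :=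
  ((Real.sqrt (1 - ‖α k‖ ^ 2) : ℝ) : ℂ)

/-- Entries of the block-diagonal factor `L = diag(Ξ_0, Ξ_2, Ξ_4, …)`, where
`Ξ_k = [[conj α_k, ρ_k],[ρ_k, -α_k]]`. -/
noncomputable def cmvLEntry (α : ℕ → ℂ) (j k : ℕ) : ℂ :=
  if j = k then (if Even j then (starRingEnd ℂ) (α j) else -α (j - 1))
  else if k = j + 1 ∧ Even j then cmvRho α j
  else if j = k + 1 ∧ Even k then cmvRho α k
  else 0

/-- Entries of the block-diagonal factor `M = diag(Ξ_{-1}, Ξ_1, Ξ_3, …)`, where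
`Ξ_{-1} = [1]`. -/
noncomputable def cmvMEntry (α : ℕ → ℂ) (j k : ℕ) : ℂ :=
  if j = 0 ∧ k = 0 then 1
  else if j = k then (if Odd j then (starRingEnd ℂ) (α j) else -α (j - 1))
  else if k = j + 1 ∧ Odd j then cmvRho α j
  else if j = k + 1 ∧ Odd k then cmvRho α k
  else 0

/-- The `N×N` CMV matrix `C = L·M` with Verblunsky coefficients `α_0, …, α_{N-1}`. -/
noncomputable def cmvMatrix (N : ℕ) (α : ℕ → ℂ) : Matrix (Fin N) (Fin N) ℂ :=
  (Matrix.of fun j k : Fin N => cmvLEntry α j k) *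
    (Matrix.of fun j k : Fin N => cmvMEntry α j k)

noncomputable def revDiag (n : ℕ) (d : Fin n → ℂ) : Matrix (Fin n) (Fin n) ℂ :=
  Matrix.of fun j k => if k = j.rev then d j else 0

lemma revDiag_mul_apply {n : ℕ} (d : Fin n → ℂ) (B : Matrix (Fin n) (Fin n) ℂ) (j k : Fin n) :
    (revDiag n d * B) j k = d j * B j.rev k := by
  simp only [revDiag, Matrix.mul_apply, Matrix.of_apply]
  rw [Finset.sum_eq_single j.rev]
  · rw [if_pos rfl]
  · intro b _ hb; rw [if_neg hb, zero_mul]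
  · intro h; exact absurd (Finset.mem_univ _) h

lemma mul_revDiag_apply {n : ℕ} (d : Fin n → ℂ) (B : Matrix (Fin n) (Fin n) ℂ) (j k : Fin n) :
    (B * revDiag n d) j k = B j k.rev * d k.rev := by
  simp only [revDiag, Matrix.mul_apply, Matrix.of_apply]
  rw [Finset.sum_eq_single k.rev]
  · rw [if_pos (by rw [Fin.rev_rev])]
  · intro b _ hb
    rw [if_neg (fun h => hb (by rw [h, Fin.rev_rev])), mul_zero]
  · intro h; exact absurd (Finset.mem_univ _) h

lemma revDiag_conjTranspose {n : ℕ} (d : Fin n → ℂ) :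
    (revDiag n d)ᴴ = revDiag n (fun j => (starRingEnd ℂ) (d j.rev)) := by
  ext j k
  simp only [conjTranspose_apply, revDiag, Matrix.of_apply]
  by_cases h : k = j.rev
  · subst h
    rw [if_pos (Fin.rev_rev j).symm, if_pos rfl]
    rfl
  · rw [if_neg (fun hh => h (by rw [hh, Fin.rev_rev])), if_neg h, star_zero]

lemma revDiag_mul_revDiag {n : ℕ} (d e : Fin n → ℂ) :
    revDiag n d * revDiag n e = Matrix.diagonal (fun j => d j * e j.rev) := by
  ext j k
  rw [revDiag_mul_apply]
  simp only [revDiag, Matrix.of_apply, Matrix.diagonal_apply, Fin.rev_rev]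
  by_cases h : j = k
  · subst h; rw [if_pos rfl, if_pos rfl]
  · rw [if_neg (fun hh => h hh.symm), if_neg h, mul_zero]

lemma cmvRho_flip (n : ℕ) (α : ℕ → ℂ) (h2 : ‖α n‖ = 1) (m : ℕ) :
    cmvRho (fun m => -(starRingEnd ℂ) (α (n - 1 - m)) * α n) m = cmvRho α (n - 1 - m) := by
  simp only [cmvRho]
  rw [neg_mul, norm_neg, norm_mul, Complex.norm_conj, h2, mul_one]

set_option maxHeartbeats 3200000 in
lemma cmv_key_L (n : ℕ) (hodd : Odd n) (α : ℕ → ℂ)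
    (h2 : ‖α n‖ = 1) (hc : (starRingEnd ℂ) (α n) * α n = 1)
    (J K : ℕ) (hJ : J < n) (hK : K < n) :
    cmvLEntry α (J + 1) (K + 1) =
      (starRingEnd ℂ) (if Even J then 1 else α n) *
        cmvLEntry (fun m => -(starRingEnd ℂ) (α (n - 1 - m)) * α n)
          (n - (J + 1)) (n - (K + 1)) *
        (if Even K then α n else 1) := by
  have hn2 : n % 2 = 1 := Nat.odd_iff.mp hodd
  simp only [cmvLEntry, cmvRho_flip n α h2, Nat.even_iff]
  rw [show n - 1 - (n - (J + 1)) = J from by omega,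
      show n - 1 - (n - (K + 1)) = K from by omega]
  split_ifs
  all_goals
    first
      | omega
      | ((try ((have h' : K = J := by omega); subst h'));
         (try ((have h' : K = J + 1 := by omega); subst h'));
         (try ((have h' : J = K + 1 := by omega); subst h'));
         (try rw [show n - 1 - (n - (J + 1) - 1) = J + 1 from by omega]);
         (try rw [show n - 1 - (n - (K + 1) - 1) = K + 1 from by omega]);
         (try simp only [Nat.add_sub_cancel, _root_.map_mul, _root_.map_neg, _root_.map_one,
           Complex.conj_conj, one_mul, mul_one, neg_mul, neg_neg, mul_neg,
           mul_zero, zero_mul]);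
         first
           | done
           | rfl
           | ring1
           | linear_combination (α J) * hc
           | linear_combination (-(α J)) * hc
           | linear_combination (α K) * hc
           | linear_combination (-(α K)) * hc
           | linear_combination (α (J + 1)) * hc
           | linear_combination (-(α (J + 1))) * hc
           | linear_combination (α (K + 1)) * hc
           | linear_combination (-(α (K + 1))) * hc
           | linear_combination ((starRingEnd ℂ) (α (J + 1))) * hc
           | linear_combination (-((starRingEnd ℂ) (α (J + 1)))) * hc
           | linear_combination ((starRingEnd ℂ) (α (K + 1))) * hc
           | linear_combination (-((starRingEnd ℂ) (α (K + 1)))) * hc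
           | linear_combination (cmvRho α (J + 1)) * hc
           | linear_combination (-(cmvRho α (J + 1))) * hc
           | linear_combination (cmvRho α (K + 1)) * hc
           | linear_combination (-(cmvRho α (K + 1))) * hc
           | linear_combination (cmvRho α J) * hc
           | linear_combination (-(cmvRho α J)) * hc
           | linear_combination (cmvRho α K) * hc
           | linear_combination (-(cmvRho α K)) * hc)

set_option maxHeartbeats 3200000 in
lemma cmv_key_M (n : ℕ) (hodd : Odd n) (α : ℕ → ℂ)
    (h2 : ‖α n‖ = 1) (hc : (starRingEnd ℂ) (α n) * α n = 1)
    (J K : ℕ) (hJ : J < n) (hK : K < n) :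
    cmvMEntry α (J + 1) (K + 1) =
      (starRingEnd ℂ) (if Even J then α n else 1) *
        cmvMEntry (fun m => -(starRingEnd ℂ) (α (n - 1 - m)) * α n)
          (n - (J + 1)) (n - (K + 1)) *
        (if Even K then 1 else α n) := by
  have hn2 : n % 2 = 1 := Nat.odd_iff.mp hodd
  simp only [cmvMEntry, cmvRho_flip n α h2, Nat.even_iff, Nat.odd_iff]
  rw [show n - 1 - (n - (J + 1)) = J from by omega,
      show n - 1 - (n - (K + 1)) = K from by omega]
  split_ifs
  all_goals
    first
      | omega
      | exact (by assumption : False ∧ False).1.elim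
      | ((try ((have h' : K = J := by omega); subst h'));
         (try ((have h' : K = J + 1 := by omega); subst h'));
         (try ((have h' : J = K + 1 := by omega); subst h'));
         (try rw [show n - 1 - (n - (J + 1) - 1) = J + 1 from by omega]);
         (try rw [show n - 1 - (n - (K + 1) - 1) = K + 1 from by omega]);
         (try rw [show J + 1 = n from by omega]);
         (try rw [show K + 1 = n from by omega]);
         (try simp only [Nat.add_sub_cancel, _root_.map_mul, _root_.map_neg, _root_.map_one,
           Complex.conj_conj, one_mul, mul_one, neg_mul, neg_neg, mul_neg,
           mul_zero, zero_mul]);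
         first
           | done
           | rfl
           | ring1
           | linear_combination hc
           | linear_combination (-1 : ℂ) * hc
           | linear_combination (α J) * hc
           | linear_combination (-(α J)) * hc
           | linear_combination (α K) * hc
           | linear_combination (-(α K)) * hc
           | linear_combination (α (J + 1)) * hc
           | linear_combination (-(α (J + 1))) * hc
           | linear_combination (α (K + 1)) * hc
           | linear_combination (-(α (K + 1))) * hc
           | linear_combination ((starRingEnd ℂ) (α (J + 1))) * hc
           | linear_combination (-((starRingEnd ℂ) (α (J + 1)))) * hc
           | linear_combination ((starRingEnd ℂ) (α (K + 1))) * hc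
           | linear_combination (-((starRingEnd ℂ) (α (K + 1)))) * hc
           | linear_combination ((starRingEnd ℂ) (α n)) * hc
           | linear_combination (-((starRingEnd ℂ) (α n))) * hc
           | linear_combination (cmvRho α (J + 1)) * hc
           | linear_combination (-(cmvRho α (J + 1))) * hc
           | linear_combination (cmvRho α (K + 1)) * hc
           | linear_combination (-(cmvRho α (K + 1))) * hc
           | linear_combination (cmvRho α J) * hc
           | linear_combination (-(cmvRho α J)) * hc
           | linear_combination (cmvRho α K) * hc
           | linear_combination (-(cmvRho α K)) * hc)

noncomputable def cmvD1 (N : ℕ) (c : ℂ) : Fin N → ℂ := fun j => if Even (j : ℕ) then 1 else c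

noncomputable def cmvD2 (N : ℕ) (c : ℂ) : Fin N → ℂ := fun j => if Even (j : ℕ) then c else 1

lemma fin_rev_even {n : ℕ} (hodd : Odd n) (j : Fin n) :
    Even ((j.rev : Fin n) : ℕ) ↔ Even (j : ℕ) := by
  have hj := j.isLt
  have hn2 := Nat.odd_iff.mp hodd
  rw [Fin.val_rev, Nat.even_iff, Nat.even_iff]
  omega

lemma revDiag_unitary {n : ℕ} (d : Fin n → ℂ)
    (hd : ∀ j, d j * (starRingEnd ℂ) (d j) = 1) (hrev : ∀ j : Fin n, d j.rev = d j) :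
    revDiag n d * (revDiag n d)ᴴ = 1 ∧ (revDiag n d)ᴴ * revDiag n d = 1 := by
  constructor
  · rw [revDiag_conjTranspose, revDiag_mul_revDiag, ← Matrix.diagonal_one]
    have h : (fun j : Fin n => d j * (starRingEnd ℂ) (d j.rev.rev)) = fun _ => (1 : ℂ) :=
      funext fun j => by rw [Fin.rev_rev]; exact hd j
    rw [h]
  · rw [revDiag_conjTranspose, revDiag_mul_revDiag, ← Matrix.diagonal_one]
    have h : (fun j : Fin n => (starRingEnd ℂ) (d j.rev) * d j.rev) = fun _ => (1 : ℂ) :=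
      funext fun j => by rw [mul_comm]; exact hd _
    rw [h]

lemma cmv_fac_L (n : ℕ) (hodd : Odd n) (α : ℕ → ℂ)
    (h2 : ‖α n‖ = 1) (hc : (starRingEnd ℂ) (α n) * α n = 1) :
    (Matrix.of fun j k : Fin n => cmvLEntry α ((j : ℕ) + 1) ((k : ℕ) + 1)) =
      (revDiag n (cmvD1 n (α n)))ᴴ *
        (Matrix.of fun j k : Fin n =>
          cmvLEntry (fun m => -(starRingEnd ℂ) (α (n - 1 - m)) * α n) (j : ℕ) (k : ℕ)) *
        revDiag n (cmvD2 n (α n)) := by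
  ext j k
  rw [Matrix.of_apply, revDiag_conjTranspose, mul_revDiag_apply, revDiag_mul_apply]
  simp only [Matrix.of_apply]
  unfold cmvD1 cmvD2
  rw [if_congr (fin_rev_even hodd j) rfl rfl, if_congr (fin_rev_even hodd k) rfl rfl,
    Fin.val_rev, Fin.val_rev]
  exact cmv_key_L n hodd α h2 hc (j : ℕ) (k : ℕ) j.isLt k.isLt

lemma cmv_fac_M (n : ℕ) (hodd : Odd n) (α : ℕ → ℂ)
    (h2 : ‖α n‖ = 1) (hc : (starRingEnd ℂ) (α n) * α n = 1) :
    (Matrix.of fun j k : Fin n => cmvMEntry α ((j : ℕ) + 1) ((k : ℕ) + 1)) =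
      (revDiag n (cmvD2 n (α n)))ᴴ *
        (Matrix.of fun j k : Fin n =>
          cmvMEntry (fun m => -(starRingEnd ℂ) (α (n - 1 - m)) * α n) (j : ℕ) (k : ℕ)) *
        revDiag n (cmvD1 n (α n)) := by
  ext j k
  rw [Matrix.of_apply, revDiag_conjTranspose, mul_revDiag_apply, revDiag_mul_apply]
  simp only [Matrix.of_apply]
  unfold cmvD1 cmvD2
  rw [if_congr (fin_rev_even hodd j) rfl rfl, if_congr (fin_rev_even hodd k) rfl rfl,
    Fin.val_rev, Fin.val_rev]
  exact cmv_key_M n hodd α h2 hc (j : ℕ) (k : ℕ) j.isLt k.isLt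

lemma cmv_trunc (n : ℕ) (α : ℕ → ℂ) :
    (cmvMatrix (n + 1) α).submatrix Fin.succ Fin.succ =
      (Matrix.of fun j k : Fin n => cmvLEntry α ((j : ℕ) + 1) ((k : ℕ) + 1)) *
        (Matrix.of fun j k : Fin n => cmvMEntry α ((j : ℕ) + 1) ((k : ℕ) + 1)) := by
  ext j k
  simp only [cmvMatrix, Matrix.submatrix_apply, Matrix.mul_apply, Matrix.of_apply]
  rw [Fin.sum_univ_succ]
  have h0 : cmvMEntry α ((0 : Fin (n + 1)) : ℕ) ((Fin.succ k : Fin (n + 1)) : ℕ) = 0 := by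
    simp only [cmvMEntry, Fin.val_zero, Fin.val_succ, Nat.odd_iff]
    rw [if_neg (by omega), if_neg (by omega), if_neg (by omega), if_neg (by omega)]
  rw [h0, mul_zero, zero_add]
  simp only [Fin.val_succ]

/-- for `n` odd, `α_0,…,α_{n-1} ∈ 𝔻` and `|α_n| = 1`, the matrix
obtained by deleting the first row and column of the `(n+1)×(n+1)` CMV matrix
`C(α_0,…,α_n)` is unitarily equivalent to
`C(-conj(α_{n-1})α_n, …, -conj(α_0)α_n)`. -/
theorem cmv_truncation_odd (n : ℕ) (hn : 0 < n) (hodd : Odd n) (α : ℕ → ℂ)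
    (h1 : ∀ k, k < n → ‖α k‖ < 1) (h2 : ‖α n‖ = 1) :
    ∃ S : Matrix (Fin n) (Fin n) ℂ, S * Sᴴ = 1 ∧ Sᴴ * S = 1 ∧
      (cmvMatrix (n + 1) α).submatrix Fin.succ Fin.succ =
        Sᴴ * (cmvMatrix n (fun k => -(starRingEnd ℂ) (α (n - 1 - k)) * α n)) * S := by
  have hc : (starRingEnd ℂ) (α n) * α n = 1 := by
    rw [mul_comm, Complex.mul_conj, Complex.normSq_eq_norm_sq, h2]
    norm_num
  have hc' : α n * (starRingEnd ℂ) (α n) = 1 := by rw [mul_comm]; exact hc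
  have hd1 : ∀ j : Fin n, cmvD1 n (α n) j * (starRingEnd ℂ) (cmvD1 n (α n) j) = 1 := by
    intro j
    unfold cmvD1
    by_cases h : Even (j : ℕ)
    · rw [if_pos h]; simp
    · rw [if_neg h]; exact hc'
  have hd2 : ∀ j : Fin n, cmvD2 n (α n) j * (starRingEnd ℂ) (cmvD2 n (α n) j) = 1 := by
    intro j
    unfold cmvD2
    by_cases h : Even (j : ℕ)
    · rw [if_pos h]; exact hc'
    · rw [if_neg h]; simp
  have hrev1 : ∀ j : Fin n, cmvD1 n (α n) j.rev = cmvD1 n (α n) j := by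
    intro j; unfold cmvD1; exact if_congr (fin_rev_even hodd j) rfl rfl
  have hrev2 : ∀ j : Fin n, cmvD2 n (α n) j.rev = cmvD2 n (α n) j := by
    intro j; unfold cmvD2; exact if_congr (fin_rev_even hodd j) rfl rfl
  obtain ⟨hU1, hU2⟩ := revDiag_unitary (cmvD1 n (α n)) hd1 hrev1
  obtain ⟨hT1, _⟩ := revDiag_unitary (cmvD2 n (α n)) hd2 hrev2
  refine ⟨revDiag n (cmvD1 n (α n)), hU1, hU2, ?_⟩
  rw [cmv_trunc n α, cmv_fac_L n hodd α h2 hc, cmv_fac_M n hodd α h2 hc, cmvMatrix]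
  simp only [Matrix.mul_assoc]
  rw [← Matrix.mul_assoc (revDiag n (cmvD2 n (α n))) (revDiag n (cmvD2 n (α n)))ᴴ, hT1,
    Matrix.one_mul]
end

section
/- The Jacobian determinant of the map from Verblunsky coefficients to coefficients of the degree-n monic Szegő polynomial: writing Φ_n(z) = z^n + κ_1^{(n)} z^{n-1} + ... + κ_n^{(n)}, the real Jacobian of the map (α_0,...,α_{n-1}) ∈ 𝔻^n ↦ (κ_1^{(n)},...,κ_n^{(n)}) ∈ ℂ^n equals (-1)^n ∏_{k=0}^{n-1} (1 - |α_k|²)^k. -/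
open Polynomial

/-- The monic Szegő polynomials: `Φ_0 = 1`,
`Φ_{j+1}(z) = z Φ_j(z) - conj(α_j) Φ_j^*(z)`. -/
noncomputable def szego (α : ℕ → ℂ) : ℕ → Polynomial ℂ
  | 0 => 1
  | k + 1 =>
      Polynomial.X * szego α k -
        Polynomial.C ((starRingEnd ℂ) (α k)) *
          Polynomial.reflect k ((szego α k).map (starRingEnd ℂ))

lemma szego_congr (α β : ℕ → ℂ) (n : ℕ) (h : ∀ k < n, α k = β k) :
    szego α n = szego β n := by
  induction n with
  | zero => rfl
  | succ k ih =>
    have hk : szego α k = szego β k := ih fun j hj => h j (hj.trans (Nat.lt_succ_self k))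
    simp [szego, hk, h k (Nat.lt_succ_self k)]

lemma szego_natDegree_le (α : ℕ → ℂ) (n : ℕ) : (szego α n).natDegree ≤ n := by
  induction n with
  | zero => simp [szego]
  | succ k ih =>
    rw [szego]
    refine (natDegree_sub_le _ _).trans (max_le ?_ ?_)
    · refine (natDegree_mul_le).trans ?_
      have : (X : Polynomial ℂ).natDegree = 1 := natDegree_X
      omega
    · refine (natDegree_mul_le).trans ?_
      have h1 : (reflect k ((szego α k).map (starRingEnd ℂ))).natDegree ≤ k := by
        refine natDegree_le_iff_coeff_eq_zero.mpr fun m hm => ?_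
        rw [coeff_reflect, revAt_eq_self_of_lt hm, coeff_map,
          coeff_eq_zero_of_natDegree_lt (lt_of_le_of_lt ih hm)]
        simp
      have h2 : (C ((starRingEnd ℂ) (α k))).natDegree = 0 := natDegree_C _
      omega

lemma szego_coeff_self (α : ℕ → ℂ) (n : ℕ) : (szego α n).coeff n = 1 := by
  induction n with
  | zero => simp [szego]
  | succ k ih =>
    rw [szego, coeff_sub, coeff_X_mul, ih, coeff_C_mul, coeff_reflect,
      revAt_eq_self_of_lt (Nat.lt_succ_self k), coeff_map,
      coeff_eq_zero_of_natDegree_lt (lt_of_le_of_lt (szego_natDegree_le α k) (Nat.lt_succ_self k))]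
    simp

lemma szego_coeff_rec (α : ℕ → ℂ) (n m : ℕ) (hm : m ≤ n) :
    (szego α (n+1)).coeff m =
      (if 1 ≤ m then (szego α n).coeff (m-1) else 0)
        - (starRingEnd ℂ) (α n) * (starRingEnd ℂ) ((szego α n).coeff (n-m)) := by
  rw [szego, coeff_sub, coeff_C_mul, coeff_reflect, revAt_le hm, coeff_map]
  congr 1
  rcases Nat.eq_zero_or_pos m with h | h
  · simp [h]
  · obtain ⟨m', rfl⟩ := Nat.exists_eq_add_of_le h
    simp [coeff_X_mul, Nat.add_comm 1 m']

/-- The map from Verblunsky coefficients `(α_0,…,α_{n-1})` to the non-leading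
coefficients `(κ_1^{(n)},…,κ_n^{(n)})` of the degree-`n` monic Szegő polynomial
`Φ_n(z) = z^n + κ_1^{(n)} z^{n-1} + … + κ_n^{(n)}`. -/
noncomputable def verblunskyToCoeffs (n : ℕ) (α : Fin n → ℂ) : Fin n → ℂ :=
  fun j => (szego (fun k => if h : k < n then α ⟨k, h⟩ else 0) n).coeff (n - 1 - (j : ℕ))

noncomputable def vstep (n : ℕ) (a : ℂ) (v : Fin n → ℂ) : Fin (n+1) → ℂ :=
  Fin.snoc (fun j => v j - (starRingEnd ℂ) a * (starRingEnd ℂ) (v j.rev))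
    (-(starRingEnd ℂ) a)

lemma verblunsky_succ (n : ℕ) (α : Fin (n+1) → ℂ) :
    verblunskyToCoeffs (n+1) α
      = vstep n (α (Fin.last n)) (verblunskyToCoeffs n (α ∘ Fin.castSucc)) := by
  have hsz : szego (fun k => if h : k < n then (α ∘ Fin.castSucc) ⟨k, h⟩ else 0) n
      = szego (fun k => if h : k < n + 1 then α ⟨k, h⟩ else 0) n := by
    apply szego_congr
    intro k hk
    simp [hk, hk.trans (Nat.lt_succ_self n), Fin.castSucc]
  funext j
  refine Fin.lastCases ?_ (fun i => ?_) j
  · -- j = last n : coeff 0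
    have h0 : (0 : ℕ) ≤ n := Nat.zero_le n
    rw [verblunskyToCoeffs]
    simp only [Fin.val_last, Nat.add_sub_cancel, Nat.sub_self, Nat.sub_zero]
    rw [szego_coeff_rec _ n 0 h0, vstep]
    simp only [Fin.snoc_last]
    rw [if_neg (by norm_num), ← hsz, Nat.sub_zero, szego_coeff_self]
    have : (if h : n < n + 1 then α ⟨n, h⟩ else 0) = α (Fin.last n) := by
      simp [Fin.last]
    simp only [this]
    norm_num
  · -- j = castSucc i
    rw [verblunskyToCoeffs, vstep]
    simp only [Fin.snoc_castSucc, Fin.coe_castSucc]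
    have hi : (i : ℕ) < n := i.isLt
    have hcoe : n + 1 - 1 - (i : ℕ) = n - (i : ℕ) := by omega
    rw [hcoe, szego_coeff_rec _ n (n - i) (Nat.sub_le n _), if_pos (by omega), ← hsz]
    have hrec : (if h : n < n + 1 then α ⟨n, h⟩ else 0) = α (Fin.last n) := by
      simp [Fin.last]
    rw [hrec]
    have h1 : verblunskyToCoeffs n (α ∘ Fin.castSucc) i
        = (szego (fun k => if h : k < n then (α ∘ Fin.castSucc) ⟨k, h⟩ else 0) n).coeff (n - 1 - (i:ℕ)) := rfl
    have h2 : verblunskyToCoeffs n (α ∘ Fin.castSucc) i.rev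
        = (szego (fun k => if h : k < n then (α ∘ Fin.castSucc) ⟨k, h⟩ else 0) n).coeff (n - 1 - ((i.rev:Fin n) : ℕ)) := rfl
    rw [h1, h2]
    have hrev : ((i.rev : Fin n) : ℕ) = n - 1 - (i:ℕ) := Fin.val_rev i ▸ (by omega)
    have e1 : n - (i:ℕ) - 1 = n - 1 - (i:ℕ) := by omega
    have e2 : n - (n - (i:ℕ)) = n - 1 - ((i.rev : Fin n) : ℕ) := by rw [hrev]; omega
    rw [e1, e2]

open Polynomial Module

-- multiplication by I as a real-linear equiv on Fin n → ℂ
noncomputable def Jmul (n : ℕ) : (Fin n → ℂ) ≃ₗ[ℝ] (Fin n → ℂ) where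
  toFun w := fun j => Complex.I * w j
  invFun w := fun j => -(Complex.I * w j)
  map_add' w₁ w₂ := by funext j; simp; ring
  map_smul' r w := by funext j; simp [Complex.real_smul]; ring
  left_inv w := by
    funext j
    have h := Complex.I_mul_I
    simp only []
    linear_combination (-(w j)) * h
  right_inv w := by
    funext j
    have h := Complex.I_mul_I
    simp only []
    linear_combination (-(w j)) * h

noncomputable def Smap (n : ℕ) (a : ℂ) : (Fin n → ℂ) →ₗ[ℝ] (Fin n → ℂ) where
  toFun w := fun j => (starRingEnd ℂ) a * (starRingEnd ℂ) (w j.rev)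
  map_add' w₁ w₂ := by funext j; simp [map_add]; ring
  map_smul' r w := by
    funext j
    simp [Complex.real_smul, map_mul, Complex.conj_ofReal]
    ring

lemma Smap_comp_Smap (n : ℕ) (a : ℂ) :
    (Smap n a) ∘ₗ (Smap n a) = (Complex.normSq a : ℝ) • LinearMap.id := by
  refine LinearMap.ext fun w => funext fun j => ?_
  simp only [LinearMap.comp_apply, LinearMap.smul_apply, LinearMap.id_apply, Pi.smul_apply,
    Smap, LinearMap.coe_mk, AddHom.coe_mk, Fin.rev_rev, map_mul, Complex.conj_conj,
    Complex.real_smul, Complex.normSq_eq_conj_mul_self]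
  ring

lemma conj_sub_smul (n : ℕ) (a : ℂ) (t : ℝ) :
    ((Jmul n : (Fin n → ℂ) →ₗ[ℝ] (Fin n → ℂ)) ∘ₗ
        (LinearMap.id - t • Smap n a)) ∘ₗ ((Jmul n).symm : (Fin n → ℂ) →ₗ[ℝ] (Fin n → ℂ))
      = LinearMap.id + t • Smap n a := by
  ext w j
  simp [Jmul, Smap, Complex.real_smul]
  ring_nf
  rw [Complex.I_sq]
  ring

lemma finrank_pifin (n : ℕ) : finrank ℝ (Fin n → ℂ) = 2 * n := by
  simp [Module.finrank_pi_fintype, Complex.finrank_real_complex, Finset.sum_const, mul_comm]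

lemma sub_mul_add (n : ℕ) (a : ℂ) (t : ℝ) :
    (LinearMap.id - t • Smap n a) ∘ₗ (LinearMap.id + t • Smap n a)
      = ((1 - t^2 * Complex.normSq a : ℝ)) • (LinearMap.id : (Fin n → ℂ) →ₗ[ℝ] (Fin n → ℂ)) := by
  refine LinearMap.ext fun w => funext fun j => ?_
  simp only [LinearMap.comp_apply, LinearMap.add_apply, LinearMap.sub_apply,
    LinearMap.smul_apply, LinearMap.id_apply, Pi.add_apply, Pi.sub_apply, Pi.smul_apply,
    Smap, LinearMap.coe_mk, AddHom.coe_mk, Fin.rev_rev, map_add, map_mul,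
    Complex.real_smul, Complex.conj_ofReal, Complex.conj_conj,
    Complex.normSq_eq_conj_mul_self, Complex.ofReal_sub, Complex.ofReal_mul,
    Complex.ofReal_pow, Complex.ofReal_one]
  ring

lemma det_sub_smul_sq (n : ℕ) (a : ℂ) (t : ℝ) :
    (LinearMap.det (LinearMap.id - t • Smap n a)) ^ 2
      = (1 - t^2 * Complex.normSq a) ^ (2 * n) := by
  have h1 : LinearMap.det (LinearMap.id + t • Smap n a)
      = LinearMap.det (LinearMap.id - t • Smap n a) := by
    rw [← conj_sub_smul n a t, LinearMap.comp_assoc]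
    exact LinearMap.det_conj _ (Jmul n)
  have h2 := congrArg LinearMap.det (sub_mul_add n a t)
  rw [LinearMap.det_comp, h1, LinearMap.det_smul, LinearMap.det_id, finrank_pifin] at h2
  rw [sq, h2, mul_one]

set_option maxHeartbeats 1000000 in
set_option synthInstance.maxHeartbeats 200000 in
lemma det_one_sub_Smap (n : ℕ) (a : ℂ) (ha : Complex.normSq a < 1) :
    LinearMap.det ((LinearMap.id : (Fin n → ℂ) →ₗ[ℝ] (Fin n → ℂ)) - Smap n a)
      = (1 - Complex.normSq a) ^ n := by
  classical
  set g : ℝ → ℝ := fun t => LinearMap.det ((LinearMap.id : (Fin n → ℂ) →ₗ[ℝ] _) - t • Smap n a)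
    with hg
  have hgsq : ∀ t, (g t)^2 = (1 - t^2 * Complex.normSq a)^(2*n) := fun t => det_sub_smul_sq n a t
  have hcont : Continuous g := by
    let B := Module.finBasis ℝ (Fin n → ℂ)
    have hrepr : g = fun t =>
        ((LinearMap.toMatrix B B) LinearMap.id - t • (LinearMap.toMatrix B B) (Smap n a)).det := by
      funext t
      show LinearMap.det ((LinearMap.id : (Fin n → ℂ) →ₗ[ℝ] _) - t • Smap n a) = _
      rw [← LinearMap.det_toMatrix B, map_sub, map_smul]
    rw [hrepr]
    exact Continuous.matrix_det (by continuity)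
  have hne : ∀ t ∈ Set.Icc (0:ℝ) 1, g t ≠ 0 := by
    intro t ht h0
    have hsq := hgsq t
    rw [h0] at hsq
    have ht2 : t^2 ≤ 1 := by nlinarith [ht.1, ht.2]
    have hpos : 0 < 1 - t^2 * Complex.normSq a := by
      nlinarith [Complex.normSq_nonneg a, ht2, ha, mul_nonneg (mul_nonneg ht.1 ht.1) (Complex.normSq_nonneg a)]
    have := pow_pos hpos (2*n)
    rw [← hsq] at this
    simp at this
  have hg0 : g 0 = 1 := by simp [hg]
  have hg1pos : 0 < g 1 := by
    rcases lt_or_gt_of_ne (hne 1 ⟨zero_le_one, le_rfl⟩) with h1 | h1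
    · exfalso
      have h0mem : (0:ℝ) ∈ Set.Icc (g 1) (g 0) := ⟨h1.le, by rw [hg0]; exact zero_le_one⟩
      obtain ⟨t, ht, h0⟩ := intermediate_value_Icc' zero_le_one hcont.continuousOn h0mem
      exact hne t ht h0
    · exact h1
  have hsq1 := hgsq 1
  have hc : (0:ℝ) < 1 - Complex.normSq a := by linarith
  have hcpow : 0 < (1 - Complex.normSq a)^n := pow_pos hc n
  have hsq' : (g 1)^2 = ((1 - Complex.normSq a)^n)^2 := by
    rw [hsq1, one_pow, one_mul, ← pow_mul]
    ring_nf
  have hfac : (g 1 - (1 - Complex.normSq a)^n) * (g 1 + (1 - Complex.normSq a)^n) = 0 := by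
    linear_combination hsq'
  have hfin : g 1 = (1 - Complex.normSq a)^n := by
    rcases mul_eq_zero.mp hfac with h | h
    · linarith
    · linarith
  have : (LinearMap.id : (Fin n → ℂ) →ₗ[ℝ] _) - Smap n a
      = LinearMap.id - (1:ℝ) • Smap n a := by rw [one_smul]
  rw [this, ← hfin, hg]

noncomputable def shear (n : ℕ) (f : ℂ →ₗ[ℝ] (Fin n → ℂ)) :
    ((Fin n → ℂ) × ℂ) →ₗ[ℝ] ((Fin n → ℂ) × ℂ) :=
  LinearMap.prod (LinearMap.fst ℝ _ _ + f ∘ₗ LinearMap.snd ℝ _ _) (LinearMap.snd ℝ _ _)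

lemma shear_apply (n : ℕ) (f : ℂ →ₗ[ℝ] (Fin n → ℂ)) (p : (Fin n → ℂ) × ℂ) :
    shear n f p = (p.1 + f p.2, p.2) := rfl

lemma shear_comp (n : ℕ) (f g : ℂ →ₗ[ℝ] (Fin n → ℂ)) :
    shear n f ∘ₗ shear n g = shear n (f + g) := by
  refine LinearMap.ext fun p => ?_
  rw [LinearMap.comp_apply, shear_apply, shear_apply, shear_apply, LinearMap.add_apply]
  refine Prod.ext ?_ rfl
  simp only []
  abel

lemma shear_zero (n : ℕ) : shear n 0 = LinearMap.id := by
  refine LinearMap.ext fun p => ?_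
  simp [shear_apply]

lemma det_shear (n : ℕ) (f : ℂ →ₗ[ℝ] (Fin n → ℂ)) : LinearMap.det (shear n f) = 1 := by
  have hsqpos : ∀ h : ℂ →ₗ[ℝ] (Fin n → ℂ), 0 ≤ LinearMap.det (shear n h) := by
    intro h
    have h2 : shear n ((2⁻¹:ℝ) • h) ∘ₗ shear n ((2⁻¹:ℝ) • h) = shear n h := by
      rw [shear_comp, ← add_smul]
      norm_num
    rw [← h2, LinearMap.det_comp]
    exact mul_self_nonneg _
  set C : ((Fin n → ℂ) × ℂ) ≃ₗ[ℝ] ((Fin n → ℂ) × ℂ) :=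
    (LinearEquiv.refl ℝ (Fin n → ℂ)).prodCongr (LinearEquiv.neg ℝ) with hC
  have hconj : (C : ((Fin n → ℂ) × ℂ) →ₗ[ℝ] _) ∘ₗ shear n f ∘ₗ (C.symm : _ →ₗ[ℝ] _)
      = shear n (-f) := by
    refine LinearMap.ext fun p => ?_
    have hns : ((LinearEquiv.neg ℝ : ℂ ≃ₗ[ℝ] ℂ)).symm = (LinearEquiv.neg ℝ : ℂ ≃ₗ[ℝ] ℂ) := by
      ext z
      have : (LinearEquiv.neg ℝ : ℂ ≃ₗ[ℝ] ℂ) (-z) = z := by simp [LinearEquiv.neg_apply]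
      calc ((LinearEquiv.neg ℝ : ℂ ≃ₗ[ℝ] ℂ)).symm z
          = ((LinearEquiv.neg ℝ : ℂ ≃ₗ[ℝ] ℂ)).symm ((LinearEquiv.neg ℝ : ℂ ≃ₗ[ℝ] ℂ) (-z)) := by rw [this]
        _ = -z := LinearEquiv.symm_apply_apply _ _
        _ = (LinearEquiv.neg ℝ : ℂ ≃ₗ[ℝ] ℂ) z := by simp [LinearEquiv.neg_apply]
    simp only [hC, LinearMap.comp_apply, LinearEquiv.coe_coe, LinearEquiv.prodCongr_symm,
      LinearEquiv.prodCongr_apply, LinearEquiv.refl_apply, LinearEquiv.neg_apply,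
      LinearEquiv.refl_symm, shear_apply, LinearMap.neg_apply, hns, map_neg, neg_neg,
      Prod.mk.injEq, neg_one_smul]
  have hdetneg : LinearMap.det (shear n (-f)) = LinearMap.det (shear n f) := by
    rw [← hconj, LinearMap.det_conj]
  have hinv : LinearMap.det (shear n f) * LinearMap.det (shear n (-f)) = 1 := by
    rw [← LinearMap.det_comp, shear_comp, add_neg_cancel, shear_zero, LinearMap.det_id]
  rw [hdetneg] at hinv
  nlinarith [hsqpos f]

lemma det_prodMapR {M N : Type*} [AddCommGroup M] [Module ℝ M] [AddCommGroup N] [Module ℝ N]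
    [FiniteDimensional ℝ M] [FiniteDimensional ℝ N] (f : M →ₗ[ℝ] M) (g : N →ₗ[ℝ] N) :
    LinearMap.det (f.prodMap g) = LinearMap.det f * LinearMap.det g := by
  classical
  let b₁ := Module.finBasis ℝ M
  let b₂ := Module.finBasis ℝ N
  rw [← LinearMap.det_toMatrix (b₁.prod b₂), LinearMap.toMatrix_prodMap b₁ b₂,
    Matrix.det_fromBlocks_zero₂₁, LinearMap.det_toMatrix, LinearMap.det_toMatrix]

noncomputable def negConjL : ℂ →ₗ[ℝ] ℂ := -(Complex.conjAe.toLinearMap)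

lemma det_negConjL : LinearMap.det negConjL = -1 := by
  have h : negConjL = Complex.conjAe.toLinearMap ∘ₗ ((-1 : ℝ) • LinearMap.id) := by
    refine LinearMap.ext fun z => ?_
    simp [negConjL]
  rw [h, LinearMap.det_comp, LinearMap.det_smul, LinearMap.det_id, Complex.det_conjAe,
    Complex.finrank_real_complex]
  norm_num

noncomputable def fmapL (n : ℕ) (v : Fin n → ℂ) : ℂ →ₗ[ℝ] (Fin n → ℂ) where
  toFun y := fun i => y * (starRingEnd ℂ) (v i.rev)
  map_add' y₁ y₂ := by funext i; simp; ring
  map_smul' r y := by funext i; simp [Complex.real_smul]; ring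

noncomputable def dstepL (n : ℕ) (v : Fin n → ℂ) (a : ℂ) :
    ((Fin n → ℂ) × ℂ) →ₗ[ℝ] (Fin (n+1) → ℂ) where
  toFun p := Fin.snoc (fun j => p.1 j - (starRingEnd ℂ) p.2 * (starRingEnd ℂ) (v j.rev)
      - (starRingEnd ℂ) a * (starRingEnd ℂ) (p.1 j.rev)) (-(starRingEnd ℂ) p.2)
  map_add' p q := by
    funext j
    refine Fin.lastCases ?_ (fun i => ?_) j <;>
      simp [Fin.snoc_last, Fin.snoc_castSucc, map_add] <;> ring
  map_smul' r p := by
    funext j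
    refine Fin.lastCases ?_ (fun i => ?_) j <;>
      simp [Fin.snoc_last, Fin.snoc_castSucc, Complex.real_smul, map_mul,
        Complex.conj_ofReal] <;> ring

noncomputable def splitEquiv (n : ℕ) : (Fin (n+1) → ℂ) ≃ₗ[ℝ] (Fin n → ℂ) × ℂ where
  toFun α := (fun i => α i.castSucc, α (Fin.last n))
  invFun p := Fin.snoc p.1 p.2
  map_add' α β := rfl
  map_smul' r α := rfl
  left_inv α := by
    funext j
    refine Fin.lastCases ?_ (fun i => ?_) j
    · simp
    · simp
  right_inv p := by
    refine Prod.ext ?_ ?_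
    · funext i; simp
    · simp

lemma udstep_eq (n : ℕ) (v : Fin n → ℂ) (a : ℂ) :
    (splitEquiv n).toLinearMap ∘ₗ dstepL n v a
      = shear n (fmapL n v) ∘ₗ
          ((LinearMap.id - Smap n a).prodMap negConjL) := by
  refine LinearMap.ext fun p => ?_
  refine Prod.ext ?_ ?_
  · funext i
    simp [splitEquiv, dstepL, shear_apply, Smap, fmapL, negConjL, LinearMap.prodMap_apply]
    ring
  · simp [splitEquiv, dstepL, shear_apply, negConjL, LinearMap.prodMap_apply]

lemma det_udstep (n : ℕ) (v : Fin n → ℂ) (a : ℂ) (ha : Complex.normSq a < 1) :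
    LinearMap.det ((splitEquiv n).toLinearMap ∘ₗ dstepL n v a)
      = -((1 - Complex.normSq a)^n) := by
  rw [udstep_eq, LinearMap.det_comp, det_shear, det_prodMapR, det_one_sub_Smap n a ha,
    det_negConjL]
  ring

noncomputable def conjCLM : ℂ →L[ℝ] ℂ := (Complex.conjCLE : ℂ ≃L[ℝ] ℂ).toContinuousLinearMap

lemma conjCLM_apply (z : ℂ) : conjCLM z = (starRingEnd ℂ) z := rfl

lemma hasFDerivAt_vstep (n : ℕ) (v : Fin n → ℂ) (a : ℂ) :
    HasFDerivAt (fun p : (Fin n → ℂ) × ℂ => vstep n p.2 p.1)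
      (dstepL n v a).toContinuousLinearMap (v, a) := by
  apply hasFDerivAt_pi''
  intro j
  refine Fin.lastCases ?_ (fun i => ?_) j
  · -- last coordinate
    set c : ((Fin n → ℂ) × ℂ) →L[ℝ] ℂ :=
      -(conjCLM.comp (ContinuousLinearMap.snd ℝ (Fin n → ℂ) ℂ)) with hc
    have hfun : (fun p : (Fin n → ℂ) × ℂ => vstep n p.2 p.1 (Fin.last n)) = ⇑c := by
      funext p
      simp [vstep, hc, conjCLM_apply]
    have hceq : c = (ContinuousLinearMap.proj (Fin.last n)).comp
        (dstepL n v a).toContinuousLinearMap := by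
      refine ContinuousLinearMap.ext fun q => ?_
      simp [hc, conjCLM_apply, dstepL]
    rw [hfun, hceq]
    exact ((ContinuousLinearMap.proj (Fin.last n)).comp
      (dstepL n v a).toContinuousLinearMap).hasFDerivAt
  · -- castSucc coordinate
    set f1 : ((Fin n → ℂ) × ℂ) →L[ℝ] ℂ :=
      (ContinuousLinearMap.proj i).comp (ContinuousLinearMap.fst ℝ (Fin n → ℂ) ℂ) with hf1
    set g1 : ((Fin n → ℂ) × ℂ) →L[ℝ] ℂ :=
      conjCLM.comp (ContinuousLinearMap.snd ℝ (Fin n → ℂ) ℂ) with hg1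
    set g2 : ((Fin n → ℂ) × ℂ) →L[ℝ] ℂ :=
      conjCLM.comp ((ContinuousLinearMap.proj i.rev).comp
        (ContinuousLinearMap.fst ℝ (Fin n → ℂ) ℂ)) with hg2
    have hfun : (fun p : (Fin n → ℂ) × ℂ => vstep n p.2 p.1 i.castSucc)
        = fun p => f1 p - g1 p * g2 p := by
      funext p
      simp [vstep, hf1, hg1, hg2, conjCLM_apply]
    have hmul : HasFDerivAt (fun p : (Fin n → ℂ) × ℂ => g1 p * g2 p)
        (g1 (v, a) • g2 + g2 (v, a) • g1) (v, a) :=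
      (g1.hasFDerivAt).mul (g2.hasFDerivAt)
    have htot : HasFDerivAt (fun p : (Fin n → ℂ) × ℂ => f1 p - g1 p * g2 p)
        (f1 - (g1 (v, a) • g2 + g2 (v, a) • g1)) (v, a) :=
      (f1.hasFDerivAt).sub hmul
    have hD : f1 - (g1 (v, a) • g2 + g2 (v, a) • g1)
        = (ContinuousLinearMap.proj i.castSucc).comp
            (dstepL n v a).toContinuousLinearMap := by
      refine ContinuousLinearMap.ext fun q => ?_
      simp [hf1, hg1, hg2, conjCLM_apply, dstepL]
      ring
    rw [hfun]
    exact hD ▸ htot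

lemma key_lemma (n : ℕ) (α : Fin n → ℂ) (hα : ∀ k, ‖α k‖ < 1) :
    ∃ D : (Fin n → ℂ) →L[ℝ] (Fin n → ℂ),
      HasFDerivAt (verblunskyToCoeffs n) D α ∧
      LinearMap.det (D : (Fin n → ℂ) →ₗ[ℝ] (Fin n → ℂ))
        = (-1:ℝ)^n * ∏ k : Fin n, (1 - ‖α k‖ ^ 2) ^ (k:ℕ) := by
  induction n with
  | zero =>
    refine ⟨0, ?_, ?_⟩
    · have h : verblunskyToCoeffs 0 = fun _ => verblunskyToCoeffs 0 α := by
        funext β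
        exact congrArg _ (Subsingleton.elim β α)
      rw [h]
      exact hasFDerivAt_const _ _
    · have h : ((0 : (Fin 0 → ℂ) →L[ℝ] (Fin 0 → ℂ)) : (Fin 0 → ℂ) →ₗ[ℝ] (Fin 0 → ℂ))
          = LinearMap.id := LinearMap.ext fun x => Subsingleton.elim _ _
      rw [h, LinearMap.det_id]
      simp
  | succ n ih =>
    obtain ⟨D', hD', hdet'⟩ := ih (α ∘ Fin.castSucc) (fun k => hα k.castSucc)
    set α' : Fin n → ℂ := α ∘ Fin.castSucc with hα'
    set a : ℂ := α (Fin.last n) with ha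
    set v : Fin n → ℂ := verblunskyToCoeffs n α' with hv
    set uC : (Fin (n+1) → ℂ) →L[ℝ] (Fin n → ℂ) × ℂ :=
      (splitEquiv n).toLinearMap.toContinuousLinearMap with huC
    set DS : ((Fin n → ℂ) × ℂ) →L[ℝ] (Fin (n+1) → ℂ) :=
      (dstepL n v a).toContinuousLinearMap with hDS
    set G : ((Fin n → ℂ) × ℂ) →L[ℝ] ((Fin n → ℂ) × ℂ) :=
      (D'.comp (ContinuousLinearMap.fst ℝ (Fin n → ℂ) ℂ)).prod
        (ContinuousLinearMap.snd ℝ (Fin n → ℂ) ℂ) with hG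
    -- the function equality
    have hfun : verblunskyToCoeffs (n+1)
        = (fun p : (Fin n → ℂ) × ℂ => vstep n p.2 p.1)
            ∘ (fun p : (Fin n → ℂ) × ℂ => (verblunskyToCoeffs n p.1, p.2)) ∘ ⇑uC := by
      funext β
      have := verblunsky_succ n β
      simpa [Function.comp_def, huC, splitEquiv] using this
    -- derivative chain
    have h1 : HasFDerivAt (⇑uC) uC α := uC.hasFDerivAt
    have huCα : uC α = (α', a) := rfl
    have h2 : HasFDerivAt (fun p : (Fin n → ℂ) × ℂ => (verblunskyToCoeffs n p.1, p.2))
        G (uC α) := by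
      rw [huCα, hG]
      exact HasFDerivAt.prodMk
        (hD'.comp (f := Prod.fst) (α', a) (hasFDerivAt_fst) :)
        (hasFDerivAt_snd)
    have hmid : (fun p : (Fin n → ℂ) × ℂ => (verblunskyToCoeffs n p.1, p.2)) (uC α)
        = (v, a) := by rw [huCα, hv]
    have h3 : HasFDerivAt (fun p : (Fin n → ℂ) × ℂ => vstep n p.2 p.1) DS
        ((fun p : (Fin n → ℂ) × ℂ => (verblunskyToCoeffs n p.1, p.2)) (uC α)) := by
      rw [hmid]
      exact hasFDerivAt_vstep n v a
    have htot : HasFDerivAt (verblunskyToCoeffs (n+1)) ((DS.comp G).comp uC) α := by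
      rw [hfun]
      exact (h3.comp α (h2.comp α h1) : _)
    refine ⟨(DS.comp G).comp uC, htot, ?_⟩
    -- determinant computation
    have hGlin : ((G : ((Fin n → ℂ) × ℂ) →L[ℝ] _) : ((Fin n → ℂ) × ℂ) →ₗ[ℝ] _)
        = LinearMap.prodMap (D' : (Fin n → ℂ) →ₗ[ℝ] (Fin n → ℂ)) LinearMap.id := by
      refine LinearMap.ext fun p => ?_
      rfl
    have hcoe : (((DS.comp G).comp uC : (Fin (n+1) → ℂ) →L[ℝ] _)
          : (Fin (n+1) → ℂ) →ₗ[ℝ] (Fin (n+1) → ℂ))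
        = (dstepL n v a) ∘ₗ (LinearMap.prodMap (D' : (Fin n → ℂ) →ₗ[ℝ] _) LinearMap.id)
            ∘ₗ (splitEquiv n).toLinearMap := by
      rw [ContinuousLinearMap.toLinearMap_comp, ContinuousLinearMap.toLinearMap_comp, hGlin]
      rfl
    rw [hcoe]
    set N : ((Fin n → ℂ) × ℂ) →ₗ[ℝ] ((Fin n → ℂ) × ℂ) :=
      LinearMap.prodMap (D' : (Fin n → ℂ) →ₗ[ℝ] _) LinearMap.id with hN
    set F : (Fin (n+1) → ℂ) →ₗ[ℝ] (Fin (n+1) → ℂ) :=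
      (dstepL n v a) ∘ₗ N ∘ₗ (splitEquiv n).toLinearMap with hF
    have hconj : ((splitEquiv n).toLinearMap ∘ₗ F ∘ₗ ((splitEquiv n).symm).toLinearMap)
        = ((splitEquiv n).toLinearMap ∘ₗ dstepL n v a) ∘ₗ N := by
      refine LinearMap.ext fun p => ?_
      simp [hF, LinearMap.comp_apply]
    have hdetF : LinearMap.det F
        = LinearMap.det ((splitEquiv n).toLinearMap ∘ₗ dstepL n v a) * LinearMap.det N := by
      rw [← LinearMap.det_conj F (splitEquiv n), hconj, LinearMap.det_comp]
    have hnormsq : Complex.normSq a < 1 := by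
      have h1 := hα (Fin.last n)
      rw [← ha] at h1
      have h0 : (0:ℝ) ≤ ‖a‖ := norm_nonneg _
      have h2 : ‖a‖ ^ 2 < 1 := pow_lt_one₀ h0 h1 (by norm_num)
      rwa [Complex.sq_norm] at h2
    have hdetN : LinearMap.det N = LinearMap.det (D' : (Fin n → ℂ) →ₗ[ℝ] _) := by
      rw [hN, det_prodMapR, LinearMap.det_id, mul_one]
    rw [hdetF, det_udstep n v a hnormsq, hdetN, hdet']
    -- final arithmetic
    rw [Fin.prod_univ_castSucc]
    have habs : Complex.normSq a = ‖α (Fin.last n)‖ ^ 2 := by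
      rw [ha, Complex.sq_norm]
    rw [habs]
    have hsame : ∀ i : Fin n, (1 - ‖α' i‖ ^ 2) ^ (i:ℕ)
        = (1 - ‖α i.castSucc‖ ^ 2) ^ ((i.castSucc : Fin (n+1)) : ℕ) := by
      intro i
      simp [hα']
    rw [Finset.prod_congr rfl (fun i _ => hsame i)]
    simp only [Fin.val_last]
    ring

/-- the real Jacobian determinant of the map
`(α_0,…,α_{n-1}) ∈ 𝔻^n ↦ (κ_1^{(n)},…,κ_n^{(n)})` equals
`(-1)^n ∏_{k=0}^{n-1} (1-|α_k|²)^k`. -/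
theorem jacobian_verblunsky_to_coeffs (n : ℕ) (hn : 0 < n) (α : Fin n → ℂ)
    (hα : ∀ k, ‖α k‖ < 1) :
    LinearMap.det
        ((fderiv ℝ (verblunskyToCoeffs n) α : (Fin n → ℂ) →L[ℝ] (Fin n → ℂ)) :
          (Fin n → ℂ) →ₗ[ℝ] (Fin n → ℂ)) =
      (-1 : ℝ) ^ n * ∏ k : Fin n, (1 - ‖α k‖ ^ 2) ^ (k : ℕ) := by
  obtain ⟨D, hD, hdet⟩ := key_lemma n α hα
  rw [hD.fderiv]
  exact hdet
end
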